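/- arXiv:2402.07481 — 3 statements merged into one kernel-verified Lean document; each statement's English description precedes it below -/
import Mathlib

section
/- For all natural numbers k ≥ 1 and n with n ≡ 4 (mod 8), the polynomials t_{2k} and C_n have no common root. -/
open Polynomial Real

noncomputable def t : ℕ → Polynomial ℝ
  | 0 => 2
  | 1 => Polynomial.X
  | (k+2) => Polynomial.X * t (k+1) - t k

noncomputable def Cpoly (n : ℕ) : Polynomial ℝ :=
  ∏ j ∈ Finset.Icc 1 ((n - 1) / 2),
    (Polynomial.X - Polynomial.C (2 * Real.cos (2 * j * Real.pi / n)))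

lemma t_eval (θ : ℝ) : ∀ m : ℕ, (t m).eval (2 * Real.cos θ) = 2 * Real.cos (m * θ) := by
  intro m
  induction m using Nat.twoStepInduction with
  | zero => simp [t]
  | one => simp [t]
  | more m ih1 ih2 =>
    show (t (m + 2)).eval _ = _
    rw [t]
    simp only [Polynomial.eval_sub, Polynomial.eval_mul, Polynomial.eval_X, ih1, ih2]
    push_cast
    have h1 : ((m:ℝ) + 2) * θ = m * θ + θ + θ := by ring
    have h2 : ((m:ℝ) + 1) * θ = m * θ + θ := by ring
    rw [h1, h2, Real.cos_add (m * θ + θ) θ, Real.cos_add (m * θ) θ,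
      Real.sin_add (m * θ) θ]
    linear_combination 2 * Real.cos ((m:ℝ) * θ) * (Real.sin_sq_add_cos_sq θ)

theorem t_even_Cpoly_no_common_root (k n : ℕ) (hk : 1 ≤ k) (hn : n % 8 = 4) :
    ∀ x : ℝ, ¬((t (2 * k)).eval x = 0 ∧ (Cpoly n).eval x = 0) := by
  rintro x ⟨ht, hC⟩
  have hnpos : 0 < n := by omega
  rw [Cpoly, Polynomial.eval_prod, Finset.prod_eq_zero_iff] at hC
  obtain ⟨j, hj, hfac⟩ := hC
  have hx : x = 2 * Real.cos (2 * j * Real.pi / n) := by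
    have := hfac
    simp only [Polynomial.eval_sub, Polynomial.eval_X, Polynomial.eval_C] at this
    linarith
  set θ : ℝ := 2 * j * Real.pi / n with hθ
  rw [hx, t_eval θ (2 * k)] at ht
  have hcos : Real.cos ((2 * k : ℕ) * θ) = 0 := by linarith
  rw [Real.cos_eq_zero_iff] at hcos
  obtain ⟨l, hl⟩ := hcos
  have hπ : Real.pi ≠ 0 := Real.pi_ne_zero
  have hnR : (n : ℝ) ≠ 0 := Nat.cast_ne_zero.mpr hnpos.ne'
  -- derive integer equation 8 k j = n (2l+1)
  have key : (8 * k * j : ℝ) = (n : ℝ) * (2 * (l : ℝ) + 1) := by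
    have := hl
    rw [hθ] at this
    push_cast at this
    field_simp at this
    nlinarith [this, Real.pi_pos]
  have keyZ : (8 * (k:ℤ) * j) = (n : ℤ) * (2 * l + 1) := by
    exact_mod_cast key
  -- n = 4 * n' with n' odd
  obtain ⟨q, hq⟩ : ∃ q, n = 8 * q + 4 := ⟨n / 8, by omega⟩
  have h4 : (n : ℤ) = 4 * (2 * q + 1) := by push_cast [hq]; ring
  rw [h4] at keyZ
  have h2 : 2 * ((k:ℤ) * j) = (2 * q + 1) * (2 * l + 1) := by linarith
  have hodd : Odd ((2 * (q:ℤ) + 1) * (2 * l + 1)) :=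
    (odd_two_mul_add_one _).mul (odd_two_mul_add_one _)
  obtain ⟨c, hc⟩ := hodd
  omega
end

section
/- For every natural number k ≥ 1, the number r_k of roots of t_k in the open interval (0, 1) equals (k − ε)/6, where ε ∈ {0, 1, 2, −2, 3, 5} is the unique element of that set with k ≡ ε (mod 6). -/
open Polynomial Real

noncomputable def r (k : ℕ) : ℕ :=
  Set.ncard {x : ℝ | x ∈ Set.Ioo (0 : ℝ) 1 ∧ (t k).eval x = 0}

lemma t_eval_cos : ∀ (k : ℕ) (θ : ℝ), (t k).eval (2 * Real.cos θ) = 2 * Real.cos (k * θ)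
  | 0, θ => by simp [t]
  | 1, θ => by simp [t]
  | (k+2), θ => by
    rw [show t (k+2) = Polynomial.X * t (k+1) - t k from rfl]
    simp only [Polynomial.eval_sub, Polynomial.eval_mul, Polynomial.eval_X,
      t_eval_cos (k+1) θ, t_eval_cos k θ]
    have h1 := Real.cos_add (((k:ℝ)+1)*θ) θ
    have h2 := Real.cos_sub (((k:ℝ)+1)*θ) θ
    have e1 : ((k:ℝ)+1)*θ + θ = ((k:ℝ)+2)*θ := by ring
    have e2 : ((k:ℝ)+1)*θ - θ = (k:ℝ)*θ := by ring
    rw [e1] at h1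
    rw [e2] at h2
    push_cast
    nlinarith [h1, h2]

theorem count_roots_in_unit_interval (k : ℕ) (hk : 1 ≤ k) (ε : ℤ)
    (hε : ε ∈ ({0, 1, 2, -2, 3, 5} : Set ℤ)) (hmod : (k : ℤ) ≡ ε [ZMOD 6]) :
    (r k : ℤ) = ((k : ℤ) - ε) / 6 := by
  have hπ := Real.pi_pos
  have hkR : (0:ℝ) < (k:ℝ) := by exact_mod_cast hk
  have hkR' : (k:ℝ) ≠ 0 := ne_of_gt hkR
  set A : Set ℝ := {θ : ℝ | θ ∈ Set.Ioo (π/3) (π/2) ∧ Real.cos ((k:ℝ) * θ) = 0} with hA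
  -- Step 1: the root set is the image of A under θ ↦ 2 cos θ
  have hSA : {x : ℝ | x ∈ Set.Ioo (0 : ℝ) 1 ∧ (t k).eval x = 0}
      = (fun θ => 2 * Real.cos θ) '' A := by
    ext x
    simp only [Set.mem_setOf_eq, Set.mem_image, Set.mem_Ioo, hA]
    constructor
    · rintro ⟨⟨hx0, hx1⟩, hev⟩
      have hb1 : (-1:ℝ) ≤ x/2 := by linarith
      have hb2 : x/2 ≤ 1 := by linarith
      have hc : Real.cos (Real.arccos (x/2)) = x/2 := Real.cos_arccos hb1 hb2
      have hx2 : 2 * Real.cos (Real.arccos (x/2)) = x := by rw [hc]; ring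
      refine ⟨Real.arccos (x/2), ⟨⟨?_, ?_⟩, ?_⟩, hx2⟩
      · have h13 : Real.arccos (1/2) = π/3 := by
          rw [← Real.cos_pi_div_three]
          exact Real.arccos_cos (by positivity) (by linarith)
        have h14 := Real.strictAntiOn_arccos (Set.mem_Icc.2 ⟨hb1, hb2⟩)
          (Set.mem_Icc.2 ⟨by norm_num, by norm_num⟩) (show x/2 < 1/2 by linarith)
        rw [h13] at h14
        exact h14
      · exact Real.arccos_lt_pi_div_two.2 (by linarith)
      · have := t_eval_cos k (Real.arccos (x/2))
        rw [hx2] at this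
        rw [this] at hev
        linarith
    · rintro ⟨θ, ⟨⟨hθ1, hθ2⟩, hcos⟩, rfl⟩
      have hmem1 : θ ∈ Set.Icc (0:ℝ) π := ⟨by linarith, by linarith⟩
      have h1 : Real.cos θ < Real.cos (π/3) :=
        Real.strictAntiOn_cos ⟨by linarith, by linarith⟩ hmem1 hθ1
      have h2 : Real.cos (π/2) < Real.cos θ :=
        Real.strictAntiOn_cos hmem1 ⟨by linarith, by linarith⟩ hθ2
      rw [Real.cos_pi_div_three] at h1
      rw [Real.cos_pi_div_two] at h2
      refine ⟨⟨by linarith, by linarith⟩, ?_⟩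
      rw [t_eval_cos k θ, hcos]
      ring
  -- Step 2: A is the image of an integer interval
  set g : ℤ → ℝ := fun j => (2*(j:ℝ)+1)*π/(2*(k:ℝ)) with hg
  set B : Set ℤ := {j : ℤ | (k:ℤ) ≤ 3*j+1 ∧ 2*j+2 ≤ (k:ℤ)} with hB
  have key : ∀ j : ℤ, (π/3 < g j ∧ g j < π/2) ↔ ((k:ℤ) ≤ 3*j+1 ∧ 2*j+2 ≤ (k:ℤ)) := by
    intro j
    rw [hg]
    simp only []
    rw [div_lt_div_iff₀ (by norm_num) (by positivity),
      div_lt_div_iff₀ (by positivity) (by norm_num)]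
    constructor
    · rintro ⟨h1, h2⟩
      have e1 : 2*(k:ℝ) < 3*(2*j+1) := by nlinarith
      have e2 : 2*(2*(j:ℝ)+1) < 2*(k:ℝ) := by nlinarith
      have e1' : 2*(k:ℤ) < 3*(2*j+1) := by exact_mod_cast e1
      have e2' : 2*(2*j+1) < 2*(k:ℤ) := by exact_mod_cast e2
      omega
    · rintro ⟨h1, h2⟩
      have e1' : 2*(k:ℤ) < 3*(2*j+1) := by omega
      have e2' : 2*(2*j+1) < 2*(k:ℤ) := by omega
      have e1 : 2*(k:ℝ) < 3*(2*(j:ℝ)+1) := by exact_mod_cast e1'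
      have e2 : 2*(2*(j:ℝ)+1) < 2*(k:ℝ) := by exact_mod_cast e2'
      constructor
      · nlinarith
      · nlinarith
  have hAB : A = g '' B := by
    ext θ
    simp only [hA, Set.mem_setOf_eq, Set.mem_Ioo, Set.mem_image, hB]
    constructor
    · rintro ⟨⟨hθ1, hθ2⟩, hcos⟩
      obtain ⟨j, hj⟩ := Real.cos_eq_zero_iff.1 hcos
      have hθ : θ = g j := by
        have hkg : (k:ℝ) * θ = (k:ℝ) * g j := by
          rw [hg, hj]
          field_simp
        exact mul_left_cancel₀ hkR' hkg
      refine ⟨j, ?_, hθ.symm⟩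
      exact (key j).1 (hθ ▸ ⟨hθ1, hθ2⟩)
    · rintro ⟨j, hjB, rfl⟩
      refine ⟨(key j).2 hjB, ?_⟩
      apply Real.cos_eq_zero_iff.2
      refine ⟨j, ?_⟩
      rw [hg]
      field_simp
  -- Step 3: B is a Finset.Icc
  have hBF : B = ↑(Finset.Icc (((k:ℤ)+1)/3) (((k:ℤ)-2)/2)) := by
    ext j
    simp only [hB, Set.mem_setOf_eq, Finset.coe_Icc, Set.mem_Icc]
    omega
  -- injectivity
  have hinj1 : Set.InjOn (fun θ => 2 * Real.cos θ) A := by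
    intro a ha b hb hab
    have ha' : a ∈ Set.Icc (0:ℝ) π := ⟨by rcases ha with ⟨⟨h,_⟩,_⟩; linarith,
      by rcases ha with ⟨⟨_,h⟩,_⟩; linarith⟩
    have hb' : b ∈ Set.Icc (0:ℝ) π := ⟨by rcases hb with ⟨⟨h,_⟩,_⟩; linarith,
      by rcases hb with ⟨⟨_,h⟩,_⟩; linarith⟩
    exact Real.injOn_cos ha' hb' (by simpa using hab)
  have hinj2 : Set.InjOn g B := by
    intro a _ b _ hab
    rw [hg] at hab
    simp only [] at hab
    have h2k : (2*(k:ℝ)) ≠ 0 := by positivity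
    rw [div_eq_div_iff (by positivity) (by positivity)] at hab
    have hπ' : (π:ℝ) ≠ 0 := ne_of_gt hπ
    have h1 := mul_right_cancel₀ h2k hab
    have h2 := mul_right_cancel₀ hπ' h1
    have : (a:ℝ) = b := by linarith
    exact_mod_cast this
  -- compute r k
  have hr : (r k : ℤ) = ((((k:ℤ)-2)/2 + 1 - ((k:ℤ)+1)/3)).toNat := by
    have : r k = (Finset.Icc (((k:ℤ)+1)/3) (((k:ℤ)-2)/2)).card := by
      rw [r, hSA, Set.ncard_image_of_injOn hinj1, hAB,
        Set.ncard_image_of_injOn hinj2, hBF, Set.ncard_coe_finset]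
    rw [this, Int.card_Icc]
  -- final arithmetic
  simp only [Set.mem_insert_iff, Set.mem_singleton_iff] at hε
  obtain ⟨m, hm⟩ := hmod.dvd
  have hk' : (1:ℤ) ≤ (k:ℤ) := by exact_mod_cast hk
  rw [hr]
  rcases hε with rfl | rfl | rfl | rfl | rfl | rfl <;> omega
end

section
/- For every natural number k ≥ 0, the number r_{2+4k} of roots of t_{2+4k} in the interval (0, 1) is odd if and only if k ≡ 1 (mod 3). -/
open Polynomial Real

/-!
Substituting `x = 2 cos θ` turns `t_m(x) = 0` into `cos (mθ) = 0`, and `x ∈ (0, 1)` into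
`θ ∈ (π/3, π/2)`. Hence the roots of `t_m` in `(0, 1)` are the numbers `2 cos ((2j+1)π/(2m))`
with `2m/3 < 2j+1 < m`. For `m = 2 + 4k` these are the `j` with `⌈(8k+2)/6⌉ ≤ j ≤ 2k`, and the
parity of their number depends only on `k mod 3`.
-/

theorem t_eval_two_mul_cos : ∀ (m : ℕ) (θ : ℝ), (t m).eval (2 * cos θ) = 2 * cos (m * θ)
  | 0, θ => by simp [t]
  | 1, θ => by simp [t]
  | m + 2, θ => by
    simp only [t, eval_sub, eval_mul, eval_X, t_eval_two_mul_cos (m + 1) θ,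
      t_eval_two_mul_cos m θ]
    push_cast
    rw [show ((m : ℝ) + 2) * θ = ((m + 1) * θ) + θ by ring,
      show (m : ℝ) * θ = ((m + 1) * θ) - θ by ring, cos_add, cos_sub]
    ring

theorem bijOn_two_mul_cos_Ioo :
    Set.BijOn (fun θ => 2 * cos θ) (Set.Ioo (π / 3) (π / 2)) (Set.Ioo 0 1) := by
  have hIcc : Set.Ioo (π / 3) (π / 2) ⊆ Set.Icc 0 π := fun θ ⟨h₁, h₂⟩ =>
    ⟨by linarith [pi_pos], by linarith [pi_pos]⟩
  have hπ3 : π / 3 ∈ Set.Icc 0 π := ⟨by positivity, by linarith [pi_pos]⟩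
  refine ⟨fun θ hθ => ?_, fun θ₁ h₁ θ₂ h₂ h => injOn_cos (hIcc h₁) (hIcc h₂) (by simpa using h),
    fun x ⟨hx₀, hx₁⟩ => ⟨arccos (x / 2), ⟨?_, ?_⟩, ?_⟩⟩
  · have hpos : 0 < cos θ := cos_pos_of_mem_Ioo ⟨by linarith [pi_pos, hθ.1], hθ.2⟩
    have hlt : cos θ < cos (π / 3) := strictAntiOn_cos hπ3 (hIcc hθ) hθ.1
    rw [cos_pi_div_three] at hlt
    exact ⟨by positivity, by linarith⟩
  · calc π / 3 = arccos (cos (π / 3)) := (arccos_cos hπ3.1 hπ3.2).symm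
      _ < arccos (x / 2) := by
        rw [cos_pi_div_three]
        exact arccos_lt_arccos (by linarith) (by linarith) (by norm_num)
  · exact arccos_lt_pi_div_two.2 (by linarith)
  · simp only
    rw [cos_arccos (by linarith) (by linarith)]
    ring

theorem rootSet_Ioo_eq_image_two_mul_cos (m : ℕ) :
    {x : ℝ | x ∈ Set.Ioo 0 1 ∧ (t m).eval x = 0} =
      (fun θ => 2 * cos θ) '' {θ | θ ∈ Set.Ioo (π / 3) (π / 2) ∧ cos (m * θ) = 0} := by
  ext x
  constructor
  · rintro ⟨hx, hroot⟩
    obtain ⟨θ, hθ, rfl⟩ := bijOn_two_mul_cos_Ioo.surjOn hx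
    rw [t_eval_two_mul_cos] at hroot
    exact ⟨θ, ⟨hθ, by linarith⟩, rfl⟩
  · rintro ⟨θ, ⟨hθ, hcos⟩, rfl⟩
    exact ⟨bijOn_two_mul_cos_Ioo.mapsTo hθ, by rw [t_eval_two_mul_cos, hcos, mul_zero]⟩

theorem zeros_cos_mul_Ioo_eq_image {m : ℕ} (hm : 0 < m) :
    {θ | θ ∈ Set.Ioo (π / 3) (π / 2) ∧ cos (m * θ) = 0} =
      (fun j : ℕ => (2 * j + 1) * π / (2 * m)) '' {j | 2 * m < 3 * (2 * j + 1) ∧ 2 * j + 1 < m} := by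
  have hm' : (0 : ℝ) < m := by exact_mod_cast hm
  have hπ := pi_pos
  ext θ
  constructor
  · rintro ⟨⟨hθ₁, hθ₂⟩, hcos⟩
    obtain ⟨n, hn⟩ := cos_eq_zero_iff.1 hcos
    have hlow : (2 * m : ℝ) < 3 * (2 * n + 1) := by nlinarith
    have hhigh : (2 * n + 1 : ℝ) < m := by nlinarith
    have hlow' : 2 * (m : ℤ) < 3 * (2 * n + 1) := by exact_mod_cast hlow
    have hhigh' : 2 * n + 1 < (m : ℤ) := by exact_mod_cast hhigh
    lift n to ℕ using by omega
    refine ⟨n, ⟨by exact_mod_cast hlow', by exact_mod_cast hhigh'⟩, ?_⟩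
    push_cast at hn
    field_simp
    linarith
  · rintro ⟨j, ⟨hlow, hhigh⟩, rfl⟩
    have hlow' : (2 * m : ℝ) < 3 * (2 * j + 1) := by exact_mod_cast hlow
    have hhigh' : (2 * j + 1 : ℝ) < m := by exact_mod_cast hhigh
    refine ⟨⟨?_, ?_⟩, cos_eq_zero_iff.2 ⟨j, ?_⟩⟩
    · rw [div_lt_div_iff₀ (by norm_num) (by positivity)]
      nlinarith
    · rw [div_lt_div_iff₀ (by positivity) (by norm_num)]
      nlinarith
    · field_simp
      push_cast
      ring

theorem r_eq_ncard {m : ℕ} (hm : 0 < m) :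
    r m = Set.ncard {j : ℕ | 2 * m < 3 * (2 * j + 1) ∧ 2 * j + 1 < m} := by
  have hm' : (0 : ℝ) < m := by exact_mod_cast hm
  have hθ_inj : Function.Injective fun j : ℕ => (2 * j + 1) * π / (2 * m) := by
    intro i j h
    field_simp [pi_ne_zero] at h
    exact_mod_cast (by linarith : (i : ℝ) = j)
  rw [r, rootSet_Ioo_eq_image_two_mul_cos,
    (bijOn_two_mul_cos_Ioo.injOn.mono fun _ h => h.1).ncard_image,
    zeros_cos_mul_Ioo_eq_image hm, Set.ncard_image_of_injective _ hθ_inj]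

theorem r_two_add_four_mul_odd_iff (k : ℕ) :
    Odd (r (2 + 4 * k)) ↔ k % 3 = 1 := by
  have hJ : {j : ℕ | 2 * (2 + 4 * k) < 3 * (2 * j + 1) ∧ 2 * j + 1 < 2 + 4 * k} =
      ↑(Finset.Ico ((8 * k + 7) / 6) (2 * k + 1)) := by
    ext j
    simp only [Set.mem_ofPred_eq, Finset.coe_Ico, Set.mem_Ico]
    omega
  rw [r_eq_ncard (by omega), hJ, Set.ncard_coe_finset, Nat.card_Ico, Nat.odd_iff]
  omega
end
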